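/- arXiv:1407.8300 — 9 statements merged into one kernel-verified Lean document; each statement's English description precedes it below -/
import Mathlib

section
/- Suppose q : ℝ → [0,1] is differentiable and satisfies q(y)(1 - q(y)) - q'(y) ≥ 1/4 for all y ∈ ℝ. Then q is identically equal to 1/2. -/
lemma aux_half (q : ℝ → ℝ) (hdiff : Differentiable ℝ q)
    (hrange : ∀ y, q y ∈ Set.Icc (0 : ℝ) 1)
    (hineq : ∀ y, q y * (1 - q y) - deriv q y ≥ 1 / 4) :
    ∀ y, q y ≤ 1 / 2 := by
  have key : ∀ y, deriv q y ≤ -(q y - 1/2)^2 := fun y => by nlinarith [hineq y]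
  have hanti : Antitone q := by
    apply antitone_of_deriv_nonpos hdiff
    intro x
    nlinarith [key x, sq_nonneg (q x - 1/2)]
  intro y₀
  by_contra hlt
  push_neg at hlt
  have hc0 : 0 < q y₀ - 1/2 := by linarith
  have hpos : ∀ x, x ≤ y₀ → q y₀ - 1/2 ≤ q x - 1/2 := by
    intro x hx
    have := hanti hx
    linarith
  have hinv : 0 < 1/(q y₀ - 1/2) := by positivity
  have ha : y₀ - 1/(q y₀ - 1/2) - 1 ≤ y₀ := by linarith
  have hderiv : ∀ x, x ≤ y₀ →
      HasDerivAt (fun x => (q x - 1/2)⁻¹ - x) (-(deriv q x) / (q x - 1/2)^2 - 1) x := by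
    intro x hx
    have hne : q x - 1/2 ≠ 0 := by have := hpos x hx; linarith
    have h1 : HasDerivAt (fun x => q x - 1/2) (deriv q x) x :=
      ((hdiff x).hasDerivAt).sub_const _
    exact (h1.inv hne).sub (hasDerivAt_id x)
  have hmono : MonotoneOn (fun x => (q x - 1/2)⁻¹ - x)
      (Set.Icc (y₀ - 1/(q y₀ - 1/2) - 1) y₀) := by
    apply monotoneOn_of_deriv_nonneg (convex_Icc _ _)
    · intro x hx
      exact ((hderiv x hx.2).differentiableAt.continuousAt).continuousWithinAt
    · intro x hx
      rw [interior_Icc] at hx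
      exact ((hderiv x hx.2.le).differentiableAt).differentiableWithinAt
    · intro x hx
      rw [interior_Icc] at hx
      rw [(hderiv x hx.2.le).deriv]
      have hk := key x
      have hp := hpos x hx.2.le
      have hu : 0 < q x - 1/2 := lt_of_lt_of_le hc0 hp
      have hu2 : 0 < (q x - 1/2)^2 := by positivity
      rw [sub_nonneg, le_div_iff₀ hu2]
      nlinarith
  have hle := hmono ⟨le_refl _, ha⟩ ⟨ha, le_refl y₀⟩ ha
  simp only at hle
  have hqa : 0 < q (y₀ - 1/(q y₀ - 1/2) - 1) - 1/2 := lt_of_lt_of_le hc0 (hpos _ ha)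
  have hia : 0 < (q (y₀ - 1/(q y₀ - 1/2) - 1) - 1/2)⁻¹ := inv_pos.mpr hqa
  have h1c : (1:ℝ)/(q y₀ - 1/2) = (q y₀ - 1/2)⁻¹ := one_div _
  linarith

theorem stmt_0 (q : ℝ → ℝ) (hdiff : Differentiable ℝ q)
    (hrange : ∀ y, q y ∈ Set.Icc (0 : ℝ) 1)
    (hineq : ∀ y, q y * (1 - q y) - deriv q y ≥ 1 / 4) :
    ∀ y, q y = 1 / 2 := by
  have hle := aux_half q hdiff hrange hineq
  set p : ℝ → ℝ := fun y => 1 - q (-y) with hp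
  have hpderiv : ∀ y, HasDerivAt p (deriv q (-y)) y := by
    intro y
    have h1 : HasDerivAt (fun y : ℝ => q (-y)) (deriv q (-y) * (-1)) y :=
      ((hdiff (-y)).hasDerivAt).comp y (hasDerivAt_neg y)
    have h2 := h1.const_sub 1
    simpa using h2
  have hpdiff : Differentiable ℝ p := fun y => (hpderiv y).differentiableAt
  have hprange : ∀ y, p y ∈ Set.Icc (0 : ℝ) 1 := by
    intro y
    obtain ⟨h1, h2⟩ := hrange (-y)
    exact ⟨by simp [hp]; linarith, by simp [hp]; linarith⟩
  have hpineq : ∀ y, p y * (1 - p y) - deriv p y ≥ 1 / 4 := by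
    intro y
    have hd : deriv p y = deriv q (-y) := (hpderiv y).deriv
    have := hineq (-y)
    simp only [hp, hd]
    nlinarith
  have hge := aux_half p hpdiff hprange hpineq
  intro y
  have h1 := hle y
  have h2 := hge (-y)
  simp only [hp, neg_neg] at h2
  linarith
end

section
/- Let Φ be a positive concave function on the open unit simplex Δ and p ∈ Δ. Then the superdifferential of log Φ at p equals (1/Φ(p)) times the superdifferential of Φ at p, i.e. ∂(log Φ)(p) = { ξ/Φ(p) : ξ ∈ ∂Φ(p) }. -/
/-!
One inclusion is `log x ≤ x - 1` applied to `Φ q / Φ p`. For the other, concavity along the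
segment from `p` to `q` and the supergradient `η` of `log Φ` give
`Φ p + t (Φ q - Φ p) ≤ Φ (p + t (q - p)) ≤ Φ p * exp (t ⟪η, q - p⟫)` for `t ∈ (0, 1]`;
letting `t → 0⁺` yields `Φ q - Φ p ≤ Φ p * ⟪η, q - p⟫`.
-/

/-- The superdifferential of a function `Ψ` on a set `S` at `p`: vectors `ξ` with
`∑ i, ξ i = 0` such that `Ψ p + ⟨ξ, q - p⟩ ≥ Ψ q` for all `q ∈ S`. -/
def superdiff {n : ℕ} (S : Set (Fin n → ℝ)) (Ψ : (Fin n → ℝ) → ℝ) (p : Fin n → ℝ) :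
    Set (Fin n → ℝ) :=
  {ξ | (∑ i, ξ i = 0) ∧ ∀ q ∈ S, Ψ p + ∑ i, ξ i * (q i - p i) ≥ Ψ q}

open Real Filter Set Topology

lemma le_of_forall_one_add_mul_le_exp {a c : ℝ}
    (h : ∀ t ∈ Ioc (0 : ℝ) 1, 1 + t * a ≤ exp (t * c)) : a ≤ c := by
  have hslope : Tendsto (fun t : ℝ => t⁻¹ * (exp (t * c) - 1)) (𝓝[>] 0) (𝓝 c) := by
    have hderiv : HasDerivAt (fun t : ℝ => exp (t * c)) c 0 := by
      simpa using (hasDerivAt_mul_const (x := 0) c).exp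
    simpa using hderiv.tendsto_slope_zero_right
  refine ge_of_tendsto hslope ?_
  filter_upwards [Ioc_mem_nhdsGT zero_lt_one] with t ht
  rw [← div_eq_inv_mul, le_div_iff₀ ht.1]
  linarith [h t ht]

section Superdiff

variable {n : ℕ} {S : Set (Fin n → ℝ)} {Ψ Φ : (Fin n → ℝ) → ℝ} {p ξ : Fin n → ℝ}

lemma smul_mem_superdiff (c : ℝ) (hsum : ∑ i, ξ i = 0)
    (h : ∀ q ∈ S, Ψ q ≤ Ψ p + c * ∑ i, ξ i * (q i - p i)) : c • ξ ∈ superdiff S Ψ p := by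
  refine ⟨by simp [← Finset.mul_sum, hsum], fun q hq => ?_⟩
  simpa [Finset.mul_sum, mul_assoc] using h q hq

lemma inv_smul_mem_superdiff_log (hpos : ∀ q ∈ S, 0 < Φ q) (hp : p ∈ S)
    (hξ : ξ ∈ superdiff S Φ p) : (Φ p)⁻¹ • ξ ∈ superdiff S (fun q => log (Φ q)) p := by
  obtain ⟨hsum, hle⟩ := hξ
  refine smul_mem_superdiff _ hsum fun q hq => ?_
  have hΦp := hpos p hp
  have hΦq := hpos q hq
  calc log (Φ q) = log (Φ p) + log (Φ q / Φ p) := by rw [log_div hΦq.ne' hΦp.ne']; ring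
    _ ≤ log (Φ p) + (Φ q / Φ p - 1) := by
      gcongr; exact log_le_sub_one_of_pos (div_pos hΦq hΦp)
    _ = log (Φ p) + (Φ p)⁻¹ * (Φ q - Φ p) := by field_simp
    _ ≤ _ := by gcongr; linarith [hle q hq]

lemma smul_mem_superdiff_of_mem_superdiff_log (hconc : ConcaveOn ℝ S Φ)
    (hpos : ∀ q ∈ S, 0 < Φ q) (hp : p ∈ S) (hξ : ξ ∈ superdiff S (fun q => log (Φ q)) p) :
    Φ p • ξ ∈ superdiff S Φ p := by
  obtain ⟨hsum, hle⟩ := hξ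
  refine smul_mem_superdiff _ hsum fun q hq => ?_
  set c := ∑ i, ξ i * (q i - p i)
  have hΦp := hpos p hp
  suffices (Φ q - Φ p) / Φ p ≤ c by rw [div_le_iff₀ hΦp] at this; linarith
  refine le_of_forall_one_add_mul_le_exp fun t ⟨ht0, ht1⟩ => ?_
  set qt := (1 - t) • p + t • q
  have hqt : qt ∈ S := hconc.1 hp hq (by linarith) ht0.le (by ring)
  have hchord : (1 - t) * Φ p + t * Φ q ≤ Φ qt := by
    simpa using hconc.2 hp hq (by linarith) ht0.le (by ring)
  have hpair : ∑ i, ξ i * (qt i - p i) = t * c := by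
    simp only [c, Finset.mul_sum]
    refine Finset.sum_congr rfl fun i _ => ?_
    simp only [qt, Pi.add_apply, Pi.smul_apply, smul_eq_mul]
    ring
  have hup : Φ qt ≤ Φ p * exp (t * c) := by
    have hlog : log (Φ qt) ≤ log (Φ p) + t * c := by linarith [hle qt hqt]
    rwa [log_le_iff_le_exp (hpos qt hqt), exp_add, exp_log hΦp] at hlog
  rw [← mul_le_mul_iff_right₀ hΦp]
  calc Φ p * (1 + t * ((Φ q - Φ p) / Φ p)) = (1 - t) * Φ p + t * Φ q := by field_simp; ring
    _ ≤ _ := hchord.trans hup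

end Superdiff

theorem stmt_3_general (n : ℕ) (Φ : (Fin n → ℝ) → ℝ)
    (Δ : Set (Fin n → ℝ))
    (hconc : ConcaveOn ℝ Δ Φ)
    (hpos : ∀ p ∈ Δ, 0 < Φ p)
    (p : Fin n → ℝ) (hp : p ∈ Δ) :
    superdiff Δ (fun q => Real.log (Φ q)) p
      = (fun ξ => (Φ p)⁻¹ • ξ) '' superdiff Δ Φ p := by
  ext η
  constructor
  · intro hη
    refine ⟨Φ p • η, smul_mem_superdiff_of_mem_superdiff_log hconc hpos hp hη, ?_⟩
    simp [smul_smul, inv_mul_cancel₀ (hpos p hp).ne']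
  · rintro ⟨ξ, hξ, rfl⟩
    exact inv_smul_mem_superdiff_log hpos hp hξ

theorem stmt_3 (n : ℕ) (hn : 2 ≤ n) (Φ : (Fin n → ℝ) → ℝ)
    (Δ : Set (Fin n → ℝ))
    (hΔ : Δ = {p | (∀ i, 0 < p i) ∧ ∑ i, p i = 1})
    (hconc : ConcaveOn ℝ Δ Φ)
    (hpos : ∀ p ∈ Δ, 0 < Φ p)
    (p : Fin n → ℝ) (hp : p ∈ Δ) :
    superdiff Δ (fun q => Real.log (Φ q)) p
      = (fun ξ => (Φ p)⁻¹ • ξ) '' superdiff Δ Φ p :=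
  stmt_3_general n Φ Δ hconc hpos p hp
end

section
/- Let Φ be a positive concave function on the open unit simplex Δ, p ∈ Δ, and v ∈ ∂(log Φ)(p) with Σᵢvᵢ = 0. Define πᵢ = pᵢ(vᵢ + 1 - Σⱼ pⱼvⱼ) for i = 1,…,n. Then π = (π₁,…,πₙ) lies in the closed unit simplex, i.e. πᵢ ≥ 0 for all i and Σᵢ πᵢ = 1. -/
/-!
Write `c = ∑ⱼ pⱼ vⱼ`, so that `πᵢ = pᵢ (vᵢ - c + 1)` and `∑ πᵢ = 1` is immediate; the point is
`vᵢ ≥ c - 1`. Moving from `p` towards `r ∈ Δ` to `q = (1 - t) p + t r`, concavity and positivity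
give `Φ q ≥ (1 - t) Φ p`, so the superdifferential inequality yields
`t ⟨v, r - p⟩ ≥ log (1 - t) ≥ -t / (1 - t)`. Letting `t → 0` gives `⟨v, r - p⟩ ≥ -1` on `Δ`,
hence on its closure, which contains the vertex `eᵢ`, where `⟨v, eᵢ - p⟩ = vᵢ - c`.
-/

open Set Filter Topology

def openSimplex (ι : Type*) [Fintype ι] : Set (ι → ℝ) :=
  {p | (∀ i, 0 < p i) ∧ ∑ i, p i = 1}

section Simplex

variable {ι : Type*} [Fintype ι]

theorem openSegment_subset_openSimplex {x y : ι → ℝ} (hx : x ∈ openSimplex ι)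
    (hy : y ∈ stdSimplex ℝ ι) : openSegment ℝ x y ⊆ openSimplex ι := by
  rintro _ ⟨a, b, ha, hb, hab, rfl⟩
  refine ⟨fun i => ?_, ?_⟩
  · have hyi := hy.1 i
    have hxi := hx.1 i
    simp only [Pi.add_apply, Pi.smul_apply, smul_eq_mul]
    positivity
  · simp only [Pi.add_apply, Pi.smul_apply, smul_eq_mul, Finset.sum_add_distrib,
      ← Finset.mul_sum, hx.2, hy.2, mul_one, hab]

theorem stdSimplex_subset_closure_openSimplex {x : ι → ℝ} (hx : x ∈ openSimplex ι) :
    stdSimplex ℝ ι ⊆ closure (openSimplex ι) := fun y hy =>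
  closure_mono (openSegment_subset_openSimplex hx hy)
    (segment_subset_closure_openSegment (right_mem_segment ℝ x y))

end Simplex

section Superdiff

variable {n : ℕ} {S : Set (Fin n → ℝ)} {Φ : (Fin n → ℝ) → ℝ} {p v : Fin n → ℝ}

theorem log_one_sub_le_of_mem_superdiff_log (hconc : ConcaveOn ℝ S Φ)
    (hpos : ∀ q ∈ S, 0 < Φ q) (hp : p ∈ S) (hv : v ∈ superdiff S (fun q => Real.log (Φ q)) p)
    {r : Fin n → ℝ} (hr : r ∈ S) {t : ℝ} (ht₀ : 0 < t) (ht₁ : t < 1) :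
    Real.log (1 - t) ≤ t * ∑ i, v i * (r i - p i) := by
  have hs : 0 < 1 - t := by linarith
  set q := (1 - t) • p + t • r
  have hq : q ∈ S := hconc.1 hp hr hs.le ht₀.le (by ring)
  have hΦq : (1 - t) * Φ p ≤ Φ q := by
    have hcomb := hconc.2 hp hr hs.le ht₀.le (by ring)
    have hΦr := mul_pos ht₀ (hpos r hr)
    simp only [smul_eq_mul] at hcomb
    linarith
  have hlog : Real.log (1 - t) + Real.log (Φ p) ≤ Real.log (Φ q) := by
    rw [← Real.log_mul hs.ne' (hpos p hp).ne']
    exact Real.log_le_log (mul_pos hs (hpos p hp)) hΦq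
  have hshift : ∑ i, v i * (q i - p i) = t * ∑ i, v i * (r i - p i) := by
    rw [Finset.mul_sum]
    refine Finset.sum_congr rfl fun i _ => ?_
    simp only [q, Pi.add_apply, Pi.smul_apply, smul_eq_mul]
    ring
  linarith [hv.2 q hq]

theorem neg_one_le_of_mem_superdiff_log (hconc : ConcaveOn ℝ S Φ)
    (hpos : ∀ q ∈ S, 0 < Φ q) (hp : p ∈ S) (hv : v ∈ superdiff S (fun q => Real.log (Φ q)) p)
    {r : Fin n → ℝ} (hr : r ∈ S) : -1 ≤ ∑ i, v i * (r i - p i) := by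
  have hlim : Tendsto (fun t : ℝ => -(1 - t)⁻¹) (𝓝[>] 0) (𝓝 (-1)) := by
    have : ContinuousAt (fun t : ℝ => -(1 - t)⁻¹) 0 := by fun_prop (disch := norm_num)
    simpa using this.tendsto.mono_left nhdsWithin_le_nhds
  refine le_of_tendsto hlim ?_
  filter_upwards [Ioo_mem_nhdsGT one_pos] with t ⟨ht₀, ht₁⟩
  have hs : 0 < 1 - t := by linarith
  have hbound : t * -(1 - t)⁻¹ ≤ t * ∑ i, v i * (r i - p i) := by
    have hlog_ge := Real.one_sub_inv_le_log_of_pos hs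
    have hlog_le := log_one_sub_le_of_mem_superdiff_log hconc hpos hp hv hr ht₀ ht₁
    have hrewrite : 1 - (1 - t)⁻¹ = t * -(1 - t)⁻¹ := by field_simp; ring
    linarith
  exact le_of_mul_le_mul_left hbound ht₀

theorem sum_mul_sub_one_le_of_mem_superdiff_log (hconc : ConcaveOn ℝ (openSimplex (Fin n)) Φ)
    (hpos : ∀ q ∈ openSimplex (Fin n), 0 < Φ q) (hp : p ∈ openSimplex (Fin n))
    (hv : v ∈ superdiff (openSimplex (Fin n)) (fun q => Real.log (Φ q)) p) (i : Fin n) :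
    ∑ j, p j * v j - 1 ≤ v i := by
  have hclosed : IsClosed {r : Fin n → ℝ | -1 ≤ ∑ j, v j * (r j - p j)} :=
    isClosed_le continuous_const (by fun_prop)
  have hi := hclosed.closure_subset_iff.2
    (fun r hr => neg_one_le_of_mem_superdiff_log hconc hpos hp hv hr)
    (stdSimplex_subset_closure_openSimplex hp (single_mem_stdSimplex ℝ i))
  simp only [mem_ofPred_eq, mul_sub, Finset.sum_sub_distrib, mul_comm (v _) (p _)] at hi
  simpa [Pi.single_apply] using hi

end Superdiff

theorem stmt_4_general (n : ℕ) (Φ : (Fin n → ℝ) → ℝ)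
    (Δ : Set (Fin n → ℝ))
    (hΔ : Δ = {p | (∀ i, 0 < p i) ∧ ∑ i, p i = 1})
    (hconc : ConcaveOn ℝ Δ Φ)
    (hpos : ∀ p ∈ Δ, 0 < Φ p)
    (p : Fin n → ℝ) (hp : p ∈ Δ)
    (v : Fin n → ℝ) (hv : v ∈ superdiff Δ (fun q => Real.log (Φ q)) p)
    (π : Fin n → ℝ)
    (hπ : ∀ i, π i = p i * (v i + 1 - ∑ j, p j * v j)) :
    (∀ i, 0 ≤ π i) ∧ ∑ i, π i = 1 := by
  change Δ = openSimplex (Fin n) at hΔ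
  subst hΔ
  have hvertex := sum_mul_sub_one_le_of_mem_superdiff_log hconc hpos hp hv
  refine ⟨fun i => hπ i ▸ mul_nonneg (hp.1 i).le (by linarith [hvertex i]), ?_⟩
  simp only [hπ, mul_add, mul_sub, Finset.sum_add_distrib, Finset.sum_sub_distrib, ← Finset.sum_mul,
    hp.2]
  ring

theorem stmt_4 (n : ℕ) (hn : 2 ≤ n) (Φ : (Fin n → ℝ) → ℝ)
    (Δ : Set (Fin n → ℝ))
    (hΔ : Δ = {p | (∀ i, 0 < p i) ∧ ∑ i, p i = 1})
    (hconc : ConcaveOn ℝ Δ Φ)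
    (hpos : ∀ p ∈ Δ, 0 < Φ p)
    (p : Fin n → ℝ) (hp : p ∈ Δ)
    (v : Fin n → ℝ) (hv : v ∈ superdiff Δ (fun q => Real.log (Φ q)) p)
    (π : Fin n → ℝ)
    (hπ : ∀ i, π i = p i * (v i + 1 - ∑ j, p j * v j)) :
    (∀ i, 0 ≤ π i) ∧ ∑ i, π i = 1 :=
  stmt_4_general n Φ Δ hΔ hconc hpos p hp v hv π hπ
end

section
/- Let π⁽¹⁾ and π⁽²⁾ be portfolios generated by positive concave functions Φ⁽¹⁾ and Φ⁽²⁾ on the open unit simplex Δ (i.e. 1 + ⟨π⁽ᵏ⁾(p)/p, q − p⟩ ≥ Φ⁽ᵏ⁾(q)/Φ⁽ᵏ⁾(p) for all p,q ∈ Δ and k=1,2). Then for λ ∈ [0,1], the portfolio π := λπ⁽¹⁾ + (1−λ)π⁽²⁾ is generated by the geometric mean Φ := (Φ⁽¹⁾)^λ (Φ⁽²⁾)^{1−λ}, i.e. 1 + ⟨π(p)/p, q − p⟩ ≥ Φ(q)/Φ(p) for all p, q ∈ Δ. -/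
theorem stmt_6 (n : ℕ) (hn : 2 ≤ n)
    (Δ : Set (Fin n → ℝ))
    (hΔ : Δ = {p | (∀ i, 0 < p i) ∧ ∑ i, p i = 1})
    (Φ₁ Φ₂ : (Fin n → ℝ) → ℝ)
    (hconc₁ : ConcaveOn ℝ Δ Φ₁) (hconc₂ : ConcaveOn ℝ Δ Φ₂)
    (hpos₁ : ∀ p ∈ Δ, 0 < Φ₁ p) (hpos₂ : ∀ p ∈ Δ, 0 < Φ₂ p)
    (π₁ π₂ : (Fin n → ℝ) → (Fin n → ℝ))
    (hmem₁ : ∀ p ∈ Δ, π₁ p ∈ closure Δ) (hmem₂ : ∀ p ∈ Δ, π₂ p ∈ closure Δ)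
    (hgen₁ : ∀ p ∈ Δ, ∀ q ∈ Δ,
      1 + ∑ i, (π₁ p i / p i) * (q i - p i) ≥ Φ₁ q / Φ₁ p)
    (hgen₂ : ∀ p ∈ Δ, ∀ q ∈ Δ,
      1 + ∑ i, (π₂ p i / p i) * (q i - p i) ≥ Φ₂ q / Φ₂ p)
    (lam : ℝ) (hlam : lam ∈ Set.Icc (0 : ℝ) 1)
    (π : (Fin n → ℝ) → (Fin n → ℝ))
    (hπ : ∀ p, π p = fun i => lam * π₁ p i + (1 - lam) * π₂ p i)
    (Φ : (Fin n → ℝ) → ℝ)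
    (hΦ : ∀ p, Φ p = Φ₁ p ^ lam * Φ₂ p ^ (1 - lam)) :
    ∀ p ∈ Δ, ∀ q ∈ Δ,
      1 + ∑ i, (π p i / p i) * (q i - p i) ≥ Φ q / Φ p := by
  obtain ⟨hl0, hl1⟩ := hlam
  intro p hp q hq
  have h1p := hpos₁ p hp
  have h2p := hpos₂ p hp
  have h1q := hpos₁ q hq
  have h2q := hpos₂ q hq
  set x := Φ₁ q / Φ₁ p with hx
  set y := Φ₂ q / Φ₂ p with hy
  have hx0 : 0 ≤ x := le_of_lt (div_pos h1q h1p)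
  have hy0 : 0 ≤ y := le_of_lt (div_pos h2q h2p)
  have hratio : Φ q / Φ p = x ^ lam * y ^ (1 - lam) := by
    rw [hΦ, hΦ, hx, hy, Real.div_rpow h1q.le h1p.le, Real.div_rpow h2q.le h2p.le]
    field_simp
  have hgm : x ^ lam * y ^ (1 - lam) ≤ lam * x + (1 - lam) * y :=
    Real.geom_mean_le_arith_mean2_weighted hl0 (by linarith) hx0 hy0 (by ring)
  have hA := hgen₁ p hp q hq
  have hB := hgen₂ p hp q hq
  have hLHS : 1 + ∑ i, (π p i / p i) * (q i - p i)
      = lam * (1 + ∑ i, (π₁ p i / p i) * (q i - p i))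
        + (1 - lam) * (1 + ∑ i, (π₂ p i / p i) * (q i - p i)) := by
    rw [hπ]
    have : ∑ i, (lam * π₁ p i + (1 - lam) * π₂ p i) / p i * (q i - p i)
        = lam * ∑ i, π₁ p i / p i * (q i - p i)
          + (1 - lam) * ∑ i, π₂ p i / p i * (q i - p i) := by
      rw [Finset.mul_sum, Finset.mul_sum, ← Finset.sum_add_distrib]
      exact Finset.sum_congr rfl fun i _ => by ring
    simp only []
    rw [this]
    ring
  rw [hratio, hLHS]
  calc x ^ lam * y ^ (1 - lam) ≤ lam * x + (1 - lam) * y := hgm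
    _ ≤ _ := by
        have h1 : lam * x ≤ lam * (1 + ∑ i, (π₁ p i / p i) * (q i - p i)) :=
          mul_le_mul_of_nonneg_left hA hl0
        have h2 : (1 - lam) * y ≤ (1 - lam) * (1 + ∑ i, (π₂ p i / p i) * (q i - p i)) :=
          mul_le_mul_of_nonneg_left hB (by linarith)
        linarith
end

section
/- With the notation of the previous setup, let T, T⁽¹⁾, T⁽²⁾ be the L-divergences of (π, Φ), (π⁽¹⁾, Φ⁽¹⁾), (π⁽²⁾, Φ⁽²⁾) respectively, where π = λπ⁽¹⁾ + (1−λ)π⁽²⁾ and Φ = (Φ⁽¹⁾)^λ(Φ⁽²⁾)^{1−λ}. Then T(q|p) ≥ λT⁽¹⁾(q|p) + (1−λ)T⁽²⁾(q|p) for all p, q ∈ Δ. -/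
open Finset

/-!
The first term of the L-divergence is the logarithm of a quantity that is affine in `π`, so
concavity of `log` makes it superadditive under mixing `π = λπ⁽¹⁾ + (1-λ)π⁽²⁾`, while the second
term is exactly additive under the geometric mixture `Φ = (Φ⁽¹⁾)^λ (Φ⁽²⁾)^(1-λ)`. The generating
inequality `1 + ⟨π(p)/p, q - p⟩ ≥ Φ(q)/Φ(p) > 0` keeps every logarithm on its positive domain.
-/

namespace Real

lemma combo_log_le_log_combo {a b t : ℝ} (ha : 0 < a) (hb : 0 < b) (ht₀ : 0 ≤ t)
    (ht₁ : t ≤ 1) : t * log a + (1 - t) * log b ≤ log (t * a + (1 - t) * b) := by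
  simpa only [smul_eq_mul] using
    strictConcaveOn_log_Ioi.concaveOn.2 ha hb ht₀ (sub_nonneg.2 ht₁) (by ring)

lemma log_div_rpow_mul_rpow {a₁ a₂ b₁ b₂ : ℝ} (s t : ℝ) (ha₁ : 0 < a₁) (ha₂ : 0 < a₂)
    (hb₁ : 0 < b₁) (hb₂ : 0 < b₂) :
    log (a₁ ^ s * a₂ ^ t / (b₁ ^ s * b₂ ^ t)) = s * log (a₁ / b₁) + t * log (a₂ / b₂) := by
  rw [log_div (by positivity) (by positivity), log_mul (by positivity) (by positivity),
    log_mul (by positivity) (by positivity), log_rpow ha₁, log_rpow ha₂, log_rpow hb₁,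
    log_rpow hb₂, log_div ha₁.ne' hb₁.ne', log_div ha₂.ne' hb₂.ne']
  ring

end Real

lemma Finset.sum_mix_div_mul {ι : Type*} (s : Finset ι) (t : ℝ) (f g p d : ι → ℝ) :
    ∑ i ∈ s, (t * f i + (1 - t) * g i) / p i * d i
      = t * ∑ i ∈ s, f i / p i * d i + (1 - t) * ∑ i ∈ s, g i / p i * d i := by
  rw [mul_sum, mul_sum, ← sum_add_distrib]
  exact sum_congr rfl fun i _ ↦ by ring

theorem stmt_7_general (n : ℕ)
    (Δ : Set (Fin n → ℝ))
    (Φ₁ Φ₂ : (Fin n → ℝ) → ℝ)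
    (hpos₁ : ∀ p ∈ Δ, 0 < Φ₁ p) (hpos₂ : ∀ p ∈ Δ, 0 < Φ₂ p)
    (π₁ π₂ : (Fin n → ℝ) → (Fin n → ℝ))
    (hgen₁ : ∀ p ∈ Δ, ∀ q ∈ Δ,
      1 + ∑ i, (π₁ p i / p i) * (q i - p i) ≥ Φ₁ q / Φ₁ p)
    (hgen₂ : ∀ p ∈ Δ, ∀ q ∈ Δ,
      1 + ∑ i, (π₂ p i / p i) * (q i - p i) ≥ Φ₂ q / Φ₂ p)
    (lam : ℝ) (hlam : lam ∈ Set.Icc (0 : ℝ) 1)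
    (π : (Fin n → ℝ) → (Fin n → ℝ))
    (hπ : ∀ p, π p = fun i => lam * π₁ p i + (1 - lam) * π₂ p i)
    (Φ : (Fin n → ℝ) → ℝ)
    (hΦ : ∀ p, Φ p = Φ₁ p ^ lam * Φ₂ p ^ (1 - lam))
    (T T₁ T₂ : (Fin n → ℝ) → (Fin n → ℝ) → ℝ)
    (hT : ∀ p q, T q p = Real.log (1 + ∑ i, (π p i / p i) * (q i - p i))
            - Real.log (Φ q / Φ p))
    (hT₁ : ∀ p q, T₁ q p = Real.log (1 + ∑ i, (π₁ p i / p i) * (q i - p i))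
            - Real.log (Φ₁ q / Φ₁ p))
    (hT₂ : ∀ p q, T₂ q p = Real.log (1 + ∑ i, (π₂ p i / p i) * (q i - p i))
            - Real.log (Φ₂ q / Φ₂ p)) :
    ∀ p ∈ Δ, ∀ q ∈ Δ, T q p ≥ lam * T₁ q p + (1 - lam) * T₂ q p := by
  intro p hp q hq
  have hx₁ : 0 < 1 + ∑ i, (π₁ p i / p i) * (q i - p i) :=
    (div_pos (hpos₁ q hq) (hpos₁ p hp)).trans_le (hgen₁ p hp q hq)
  have hx₂ : 0 < 1 + ∑ i, (π₂ p i / p i) * (q i - p i) :=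
    (div_pos (hpos₂ q hq) (hpos₂ p hp)).trans_le (hgen₂ p hp q hq)
  have hmix : 1 + ∑ i, (π p i / p i) * (q i - p i)
      = lam * (1 + ∑ i, (π₁ p i / p i) * (q i - p i))
        + (1 - lam) * (1 + ∑ i, (π₂ p i / p i) * (q i - p i)) := by
    simp only [hπ p, sum_mix_div_mul]
    ring
  rw [hT, hT₁, hT₂, hmix, hΦ, hΦ, Real.log_div_rpow_mul_rpow _ _ (hpos₁ q hq) (hpos₂ q hq)
    (hpos₁ p hp) (hpos₂ p hp)]
  linarith [Real.combo_log_le_log_combo hx₁ hx₂ hlam.1 hlam.2]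

theorem stmt_7 (n : ℕ) (hn : 2 ≤ n)
    (Δ : Set (Fin n → ℝ))
    (hΔ : Δ = {p | (∀ i, 0 < p i) ∧ ∑ i, p i = 1})
    (Φ₁ Φ₂ : (Fin n → ℝ) → ℝ)
    (hconc₁ : ConcaveOn ℝ Δ Φ₁) (hconc₂ : ConcaveOn ℝ Δ Φ₂)
    (hpos₁ : ∀ p ∈ Δ, 0 < Φ₁ p) (hpos₂ : ∀ p ∈ Δ, 0 < Φ₂ p)
    (π₁ π₂ : (Fin n → ℝ) → (Fin n → ℝ))
    (hmem₁ : ∀ p ∈ Δ, π₁ p ∈ closure Δ) (hmem₂ : ∀ p ∈ Δ, π₂ p ∈ closure Δ)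
    (hgen₁ : ∀ p ∈ Δ, ∀ q ∈ Δ,
      1 + ∑ i, (π₁ p i / p i) * (q i - p i) ≥ Φ₁ q / Φ₁ p)
    (hgen₂ : ∀ p ∈ Δ, ∀ q ∈ Δ,
      1 + ∑ i, (π₂ p i / p i) * (q i - p i) ≥ Φ₂ q / Φ₂ p)
    (lam : ℝ) (hlam : lam ∈ Set.Icc (0 : ℝ) 1)
    (π : (Fin n → ℝ) → (Fin n → ℝ))
    (hπ : ∀ p, π p = fun i => lam * π₁ p i + (1 - lam) * π₂ p i)
    (Φ : (Fin n → ℝ) → ℝ)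
    (hΦ : ∀ p, Φ p = Φ₁ p ^ lam * Φ₂ p ^ (1 - lam))
    (T T₁ T₂ : (Fin n → ℝ) → (Fin n → ℝ) → ℝ)
    (hT : ∀ p q, T q p = Real.log (1 + ∑ i, (π p i / p i) * (q i - p i))
            - Real.log (Φ q / Φ p))
    (hT₁ : ∀ p q, T₁ q p = Real.log (1 + ∑ i, (π₁ p i / p i) * (q i - p i))
            - Real.log (Φ₁ q / Φ₁ p))
    (hT₂ : ∀ p q, T₂ q p = Real.log (1 + ∑ i, (π₂ p i / p i) * (q i - p i))
            - Real.log (Φ₂ q / Φ₂ p)) :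
    ∀ p ∈ Δ, ∀ q ∈ Δ, T q p ≥ lam * T₁ q p + (1 - lam) * T₂ q p :=
  stmt_7_general n Δ Φ₁ Φ₂ hpos₁ hpos₂ π₁ π₂ hgen₁ hgen₂ lam hlam π hπ Φ hΦ T T₁ T₂ hT hT₁ hT₂
end

section
/- Let u(x) = √(x(1−x)) for x ∈ (0,1), let v : (0,1) → (0,∞) be C² and concave, and define q(y) = x + x(1−x)v'(x)/v(x) with x = e^y/(1+e^y) for y ∈ ℝ. Then q(y)(1 − q(y)) − q'(y) = −(e^{2y}/(1+e^y)⁴) · v''(x)/v(x), where x = e^y/(1+e^y). -/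
/-! The substitution x = e^y/(1+e^y) is Mathlib's `Real.sigmoid`, whose derivative is
σ(1-σ); moreover e^{2y}/(1+e^y)^4 = (σ(1-σ))². So q = Q ∘ σ with Q(x) = x + x(1-x)v'/v, the chain
rule gives q' = σ(1-σ)·Q'(σ), and the identity is then a rational-function computation in
σ, v, v', v''. -/

open Real Set

lemma exp_div_one_add_exp (y : ℝ) : exp y / (1 + exp y) = sigmoid y := by
  rw [sigmoid_def, exp_neg]
  field_simp
  ring

lemma exp_two_mul_div_one_add_exp_pow_four (y : ℝ) :
    exp (2 * y) / (1 + exp y) ^ 4 = (sigmoid y * (1 - sigmoid y)) ^ 2 := by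
  rw [← exp_div_one_add_exp, two_mul, exp_add]
  field_simp
  ring

lemma ContDiffOn.hasDerivAt_deriv {v : ℝ → ℝ} {s : Set ℝ} {n : WithTop ℕ∞}
    (hv : ContDiffOn ℝ n v s) (hn : n ≠ 0) (hs : IsOpen s) {x : ℝ} (hx : x ∈ s) :
    HasDerivAt v (deriv v x) x :=
  ((hv.contDiffAt (hs.mem_nhds hx)).differentiableAt hn).hasDerivAt

lemma ContDiffOn.hasDerivAt_deriv_deriv {v : ℝ → ℝ} {s : Set ℝ}
    (hv : ContDiffOn ℝ 2 v s) (hs : IsOpen s) {x : ℝ} (hx : x ∈ s) :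
    HasDerivAt (deriv v) (deriv (deriv v) x) x :=
  (hv.deriv_of_isOpen (m := 1) hs (by norm_num)).hasDerivAt_deriv (by norm_num) hs hx

lemma HasDerivAt.id_add_mul_one_sub_mul_div {f g : ℝ → ℝ} {f' g' x : ℝ}
    (hf : HasDerivAt f f' x) (hg : HasDerivAt g g' x) (hfx : f x ≠ 0) :
    HasDerivAt (fun t => t + t * (1 - t) * g t / f t)
      (1 + (((1 - 2 * x) * g x + x * (1 - x) * g') * f x - x * (1 - x) * g x * f') / f x ^ 2) x := by
  have hquad : HasDerivAt (fun t => t * (1 - t)) (1 - 2 * x) x :=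
    ((hasDerivAt_id' x).mul ((hasDerivAt_id' x).const_sub 1)).congr_deriv (by ring)
  exact (hasDerivAt_id x).add ((hquad.mul hg).div hf hfx)

theorem stmt_12_general (v : ℝ → ℝ)
    (hv : ContDiffOn ℝ 2 v (Set.Ioo (0 : ℝ) 1))
    (hpos : ∀ x ∈ Set.Ioo (0 : ℝ) 1, 0 < v x)
    (q : ℝ → ℝ)
    (hq : ∀ y : ℝ, q y =
      Real.exp y / (1 + Real.exp y)
        + (Real.exp y / (1 + Real.exp y)) * (1 - Real.exp y / (1 + Real.exp y))
          * deriv v (Real.exp y / (1 + Real.exp y))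
          / v (Real.exp y / (1 + Real.exp y))) :
    ∀ y : ℝ,
      q y * (1 - q y) - deriv q y
        = -(Real.exp (2 * y) / (1 + Real.exp y) ^ 4)
            * deriv (deriv v) (Real.exp y / (1 + Real.exp y))
            / v (Real.exp y / (1 + Real.exp y)) := by
  intro y
  have hmem : sigmoid y ∈ Ioo (0 : ℝ) 1 := ⟨sigmoid_pos y, sigmoid_lt_one y⟩
  have hq_comp : q = (fun t => t + t * (1 - t) * deriv v t / v t) ∘ sigmoid := by
    funext z
    rw [hq z, exp_div_one_add_exp, Function.comp_apply]
  have hvne : v (sigmoid y) ≠ 0 := (hpos _ hmem).ne'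
  have hQ := (hv.hasDerivAt_deriv (by norm_num) isOpen_Ioo hmem).id_add_mul_one_sub_mul_div
    (hv.hasDerivAt_deriv_deriv isOpen_Ioo hmem) hvne
  have hq' := hq_comp ▸ hQ.comp y (hasDerivAt_sigmoid y)
  rw [hq'.deriv, hq y, exp_div_one_add_exp, exp_two_mul_div_one_add_exp_pow_four]
  field_simp
  ring

theorem stmt_12 (v : ℝ → ℝ)
    (hv : ContDiffOn ℝ 2 v (Set.Ioo (0 : ℝ) 1))
    (hconc : ConcaveOn ℝ (Set.Ioo (0 : ℝ) 1) v)
    (hpos : ∀ x ∈ Set.Ioo (0 : ℝ) 1, 0 < v x)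
    (q : ℝ → ℝ)
    (hq : ∀ y : ℝ, q y =
      Real.exp y / (1 + Real.exp y)
        + (Real.exp y / (1 + Real.exp y)) * (1 - Real.exp y / (1 + Real.exp y))
          * deriv v (Real.exp y / (1 + Real.exp y))
          / v (Real.exp y / (1 + Real.exp y))) :
    ∀ y : ℝ,
      q y * (1 - q y) - deriv q y
        = -(Real.exp (2 * y) / (1 + Real.exp y) ^ 4)
            * deriv (deriv v) (Real.exp y / (1 + Real.exp y))
            / v (Real.exp y / (1 + Real.exp y)) :=
  stmt_12_general v hv hpos q hq
end

section
/- For n = 2, the equal-weighted portfolio π ≡ (1/2, 1/2) is maximal among C¹ functionally generated portfolios: if v : (0,1) → (0,∞) is C², concave, satisfies −v''(x)/v(x) ≥ 1/(4(x(1−x))²) for all x ∈ (0,1), and x(1 + (1−x)(log v)'(x)) ∈ [0,1] for all x ∈ (0,1), then x + x(1−x)v'(x)/v(x) = 1/2 for all x ∈ (0,1). -/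
/-!
The weight `π = x + x (1 - x) v'/v` satisfies the Riccati equation
`x (1 - x) π' = 1/4 - (π - 1/2)² + (x (1 - x))² v''/v`, so the drift condition gives
`q' ≤ -q² / (x (1 - x))` for `q = π - 1/2`. A bounded solution of this inequality vanishes:
a negative value `q x₀ = c` drives `q` below `c + c² log ((1 - x) / (1 - x₀))`, which tends to
`-∞` as `x → 1`, and by the reflection `x ↦ 1 - x` a positive value blows up as `x → 0`.
-/

open Set Real

lemma antitoneOn_of_hasDerivAt_nonpos {D : Set ℝ} (hD : Convex ℝ D) {f f' : ℝ → ℝ}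
    (hf : ∀ x ∈ D, HasDerivAt f (f' x) x) (hf'₀ : ∀ x ∈ interior D, f' x ≤ 0) :
    AntitoneOn f D :=
  antitoneOn_of_hasDerivWithinAt_nonpos hD
    (fun x hx => (hf x hx).continuousAt.continuousWithinAt)
    (fun x hx => (hf x (interior_subset hx)).hasDerivWithinAt) hf'₀

section Riccati

variable {q q' : ℝ → ℝ} (hq : ∀ x ∈ Ioo (0 : ℝ) 1, HasDerivAt q (q' x) x)
  (hq' : ∀ x ∈ Ioo (0 : ℝ) 1, q' x ≤ -q x ^ 2 / (x * (1 - x)))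
include hq hq'

lemma nonneg_of_le_neg_sq_div {B : ℝ} (hB : ∀ x ∈ Ioo (0 : ℝ) 1, B ≤ q x) :
    ∀ x ∈ Ioo (0 : ℝ) 1, 0 ≤ q x := by
  intro x₀ hx₀
  by_contra! hc
  set c := q x₀
  have hsub : Ico x₀ 1 ⊆ Ioo 0 1 := fun y hy => ⟨hx₀.1.trans_le hy.1, hy.2⟩
  have hq_anti : AntitoneOn q (Ico x₀ 1) := by
    refine antitoneOn_of_hasDerivAt_nonpos (convex_Ico _ _) (fun y hy => hq y (hsub hy))
      fun y hy => (hq' y (hsub (interior_subset hy))).trans ?_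
    have hy' := hsub (interior_subset hy)
    exact div_nonpos_of_nonpos_of_nonneg (by nlinarith) (mul_pos hy'.1 (sub_pos.2 hy'.2)).le
  have hlog (y : ℝ) (hy : y < 1) :
      HasDerivAt (fun y => log (1 - y)) (-1 / (1 - y)) y :=
    ((hasDerivAt_id y).const_sub 1).log (sub_ne_zero.2 hy.ne')
  have h_anti : AntitoneOn (fun y => q y - c ^ 2 * log (1 - y)) (Ico x₀ 1) := by
    refine antitoneOn_of_hasDerivAt_nonpos (convex_Ico _ _)
      (fun y hy => (hq y (hsub hy)).sub ((hlog y hy.2).const_mul _)) fun y hy => ?_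
    rw [interior_Ico] at hy
    have hy0 : 0 < y := hx₀.1.trans hy.1
    have h1y : 0 < 1 - y := by linarith [hy.2]
    have hqy : q y ≤ c := hq_anti ⟨le_rfl, hx₀.2⟩ (Ioo_subset_Ico_self hy) hy.1.le
    have hsq : c ^ 2 ≤ q y ^ 2 := by nlinarith
    calc q' y - c ^ 2 * (-1 / (1 - y)) = q' y + c ^ 2 / (1 - y) := by ring
      _ ≤ -q y ^ 2 / (y * (1 - y)) + c ^ 2 / (1 - y) := by
          gcongr ?_ + _; exact hq' y (hsub (Ioo_subset_Ico_self hy))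
      _ ≤ -c ^ 2 / (1 - y) + c ^ 2 / (1 - y) := by
          gcongr ?_ + _
          rw [div_le_div_iff₀ (mul_pos hy0 h1y) h1y]
          nlinarith [mul_le_mul_of_nonneg_right hsq h1y.le,
            mul_nonneg (sq_nonneg c) (sq_nonneg (1 - y))]
      _ = 0 := by ring
  -- `t` is chosen so that `q y ≤ c - c² t = B - 1`.
  set t := (c - B + 1) / c ^ 2
  have hc2 : 0 < c ^ 2 := by nlinarith
  have ht : 0 ≤ t := div_nonneg (by linarith [hB x₀ hx₀]) hc2.le
  set y := 1 - (1 - x₀) * exp (-t)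
  have hy : y ∈ Ico x₀ 1 := by
    have h1 : exp (-t) ≤ 1 := exp_le_one_iff.2 (by linarith)
    have h2 := exp_pos (-t)
    constructor <;> nlinarith [hx₀.2]
  have hlogy : log (1 - y) = log (1 - x₀) - t := by
    rw [sub_sub_cancel, log_mul (by linarith [hx₀.2]) (exp_pos _).ne', log_exp]; ring
  have key := h_anti ⟨le_rfl, hx₀.2⟩ hy hy.1
  simp only [hlogy] at key
  have hct : c ^ 2 * t = c - B + 1 := mul_div_cancel₀ _ hc2.ne'
  linarith [hB y (hsub hy)]

lemma eq_zero_of_le_neg_sq_div {M : ℝ} (hM : ∀ x ∈ Ioo (0 : ℝ) 1, |q x| ≤ M) :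
    ∀ x ∈ Ioo (0 : ℝ) 1, q x = 0 := by
  have hrefl (x : ℝ) (hx : x ∈ Ioo (0 : ℝ) 1) : 1 - x ∈ Ioo (0 : ℝ) 1 :=
    ⟨sub_pos.2 hx.2, sub_lt_self 1 hx.1⟩
  have hneg := nonneg_of_le_neg_sq_div (q := fun x => -q (1 - x)) (q' := fun x => q' (1 - x))
    (fun x hx => ((hq _ (hrefl x hx)).comp x ((hasDerivAt_id x).const_sub 1)).neg.congr_deriv
      (by ring))
    (fun x hx => by
      have := hq' _ (hrefl x hx)
      rw [neg_sq]; rwa [sub_sub_cancel, mul_comm] at this)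
    (B := -M) (fun x hx => by have := hM _ (hrefl x hx); rw [abs_le] at this; linarith)
  intro x hx
  have h1 := nonneg_of_le_neg_sq_div hq hq' (B := -M)
    (fun x hx => (abs_le.1 (hM x hx)).1) x hx
  have h2 := hneg (1 - x) (hrefl x hx)
  simp only [sub_sub_cancel] at h2
  linarith

end Riccati

lemma hasDerivAt_generatedWeight {v v' v'' : ℝ → ℝ} {x : ℝ} (hv : HasDerivAt v (v' x) x)
    (hv' : HasDerivAt v' (v'' x) x) (hvx : v x ≠ 0) (hx : x * (1 - x) ≠ 0) :
    HasDerivAt (fun y => y + y * (1 - y) * v' y / v y)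
      ((1 / 4 + (x * (1 - x)) ^ 2 * v'' x / v x - (x + x * (1 - x) * v' x / v x - 1 / 2) ^ 2)
        / (x * (1 - x))) x := by
  have hφ : HasDerivAt (fun y : ℝ => y * (1 - y)) (1 * (1 - x) + x * -1) x :=
    (hasDerivAt_id x).mul ((hasDerivAt_id x).const_sub 1)
  refine ((hasDerivAt_id x).add ((hφ.mul hv').div hv hvx)).congr_deriv ?_
  obtain ⟨hx₀, hx₁⟩ := mul_ne_zero_iff.1 hx
  simp only [Pi.mul_apply]
  field_simp
  ring

theorem stmt_13_general (v : ℝ → ℝ)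
    (hv : ContDiffOn ℝ 2 v (Set.Ioo (0 : ℝ) 1))
    (hpos : ∀ x ∈ Set.Ioo (0 : ℝ) 1, 0 < v x)
    (hdrift : ∀ x ∈ Set.Ioo (0 : ℝ) 1,
      -(deriv (deriv v) x) / v x ≥ 1 / (4 * (x * (1 - x)) ^ 2))
    (hweight : ∀ x ∈ Set.Ioo (0 : ℝ) 1,
      x * (1 + (1 - x) * (deriv v x / v x)) ∈ Set.Icc (0 : ℝ) 1) :
    ∀ x ∈ Set.Ioo (0 : ℝ) 1,
      x + x * (1 - x) * deriv v x / v x = 1 / 2 := by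
  have hv' : ∀ x ∈ Ioo (0 : ℝ) 1, HasDerivAt v (deriv v x) x := fun x hx =>
    ((hv.contDiffAt (isOpen_Ioo.mem_nhds hx)).differentiableAt (by norm_num)).hasDerivAt
  have hv'' : ∀ x ∈ Ioo (0 : ℝ) 1, HasDerivAt (deriv v) (deriv (deriv v) x) x := fun x hx =>
    (((hv.deriv_of_isOpen (m := 1) isOpen_Ioo (by norm_num)).contDiffAt
      (isOpen_Ioo.mem_nhds hx)).differentiableAt one_ne_zero).hasDerivAt
  have hφ (x : ℝ) (hx : x ∈ Ioo (0 : ℝ) 1) : 0 < x * (1 - x) := mul_pos hx.1 (sub_pos.2 hx.2)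
  have hq : ∀ x ∈ Ioo (0 : ℝ) 1, x + x * (1 - x) * deriv v x / v x - 1 / 2 = 0 := by
    refine eq_zero_of_le_neg_sq_div (fun x hx => (hasDerivAt_generatedWeight (hv' x hx)
      (hv'' x hx) (hpos x hx).ne' (hφ x hx).ne').sub_const (1 / 2)) (fun x hx => ?_)
      (M := 1 / 2) (fun x hx => ?_)
    · refine div_le_div_of_nonneg_right ?_ (hφ x hx).le
      have hdrift' := mul_le_mul_of_nonneg_left (hdrift x hx) (sq_nonneg (x * (1 - x)))
      have h4 : (x * (1 - x)) ^ 2 * (1 / (4 * (x * (1 - x)) ^ 2)) = 1 / 4 := by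
        field_simp [hx.1.ne', (sub_pos.2 hx.2).ne']
      rw [h4, mul_div_assoc', mul_neg, neg_div] at hdrift'
      linarith
    · have h := hweight x hx
      rw [show x * (1 + (1 - x) * (deriv v x / v x)) = x + x * (1 - x) * deriv v x / v x by ring]
        at h
      rw [abs_le]
      constructor <;> linarith [h.1, h.2]
  intro x hx
  linarith [hq x hx]

theorem stmt_13 (v : ℝ → ℝ)
    (hv : ContDiffOn ℝ 2 v (Set.Ioo (0 : ℝ) 1))
    (hconc : ConcaveOn ℝ (Set.Ioo (0 : ℝ) 1) v)
    (hpos : ∀ x ∈ Set.Ioo (0 : ℝ) 1, 0 < v x)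
    (hdrift : ∀ x ∈ Set.Ioo (0 : ℝ) 1,
      -(deriv (deriv v) x) / v x ≥ 1 / (4 * (x * (1 - x)) ^ 2))
    (hweight : ∀ x ∈ Set.Ioo (0 : ℝ) 1,
      x * (1 + (1 - x) * (deriv v x / v x)) ∈ Set.Icc (0 : ℝ) 1) :
    ∀ x ∈ Set.Ioo (0 : ℝ) 1,
      x + x * (1 - x) * deriv v x / v x = 1 / 2 :=
  stmt_13_general v hv hpos hdrift hweight
end

section
/- The function Φ(p) = (p₁p₂⋯pₙ)^{1/n} (the geometric mean) satisfies ∫₀¹ Φ(t·e(1) + (1−t)·ē)⁻² dt = ∞, where ē = (1/n,…,1/n) and e(1) = (1,0,…,0). -/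
/-!
Write `s = 1 - t`. On the segment the first coordinate is `t + s/n ≤ 1` and the other `n - 1`
coordinates equal `s/n ≤ s`, so the product is at most `s^(n-1)` and
`Φ² ≤ s^(2(n-1)/n) ≤ s` because `2(n-1)/n ≥ 1` when `n ≥ 2`. Hence the integrand dominates
`1/(1 - t)`, which is not integrable at `t = 1`.
-/

open MeasureTheory Set

lemma lintegral_Ioo_inv_sub_eq_top {a b : ℝ} (hab : a < b) :
    ∫⁻ t in Ioo a b, ENNReal.ofReal (1 / (b - t)) = ⊤ := by
  by_contra hfin
  have hnonneg : 0 ≤ᵐ[volume.restrict (Ioo a b)] fun t => 1 / (b - t) := by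
    filter_upwards [ae_restrict_mem measurableSet_Ioo] with t ht
    exact one_div_nonneg.2 (sub_nonneg.2 ht.2.le)
  have hmeas : Measurable fun t => 1 / (b - t) := by fun_prop
  have hint : IntegrableOn (fun t => 1 / (b - t)) (Ioo a b) :=
    (lintegral_ofReal_ne_top_iff_integrable hmeas.aestronglyMeasurable hnonneg).1 hfin
  have hint_interval : IntervalIntegrable (fun t => (t - b)⁻¹) volume a b := by
    rw [intervalIntegrable_iff_integrableOn_Ioo_of_le hab.le]
    refine hint.neg.congr_fun (fun t _ => ?_) measurableSet_Ioo
    rw [Pi.neg_apply, one_div, ← inv_neg, neg_sub]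
  rcases intervalIntegrable_sub_inv_iff.1 hint_interval with h | h
  · exact hab.ne h
  · exact h right_mem_uIcc

lemma prod_segment_vertex_barycenter {n : ℕ} (hn : 1 ≤ n) (t : ℝ) :
    ∏ i : Fin n, (t * (if (i : ℕ) = 0 then 1 else 0) + (1 - t) * (n : ℝ)⁻¹) =
      (t + (1 - t) * (n : ℝ)⁻¹) * ((1 - t) * (n : ℝ)⁻¹) ^ (n - 1) := by
  obtain ⟨m, rfl⟩ := Nat.exists_eq_add_of_le' hn
  simp [Fin.prod_univ_succ]

lemma prod_segment_vertex_barycenter_le {n : ℕ} (hn : 1 ≤ n) {t : ℝ} (ht : t ∈ Icc (0 : ℝ) 1) :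
    ∏ i : Fin n, (t * (if (i : ℕ) = 0 then 1 else 0) + (1 - t) * (n : ℝ)⁻¹) ≤
      (1 - t) ^ (n - 1) := by
  have hinv : (n : ℝ)⁻¹ ≤ 1 := inv_le_one_of_one_le₀ (by exact_mod_cast hn)
  have hs : 0 ≤ 1 - t := sub_nonneg.2 ht.2
  rw [prod_segment_vertex_barycenter hn, ← one_mul ((1 - t) ^ (n - 1))]
  gcongr
  · nlinarith [ht.1]
  · exact mul_le_of_le_one_right hs hinv

lemma sq_rpow_inv_natCast_le {n : ℕ} (hn : 2 ≤ n) {P s : ℝ} (hP : 0 ≤ P) (hs₀ : 0 ≤ s)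
    (hs₁ : s ≤ 1) (hPs : P ≤ s ^ (n - 1)) : (P ^ (n : ℝ)⁻¹) ^ 2 ≤ s := by
  have hn0 : n ≠ 0 := by omega
  rw [← pow_le_pow_iff_left₀ (by positivity) hs₀ hn0, ← pow_mul, mul_comm, pow_mul,
    Real.rpow_inv_natCast_pow hP hn0]
  calc P ^ 2 ≤ (s ^ (n - 1)) ^ 2 := by gcongr
    _ = s ^ (2 * (n - 1)) := by rw [← pow_mul, mul_comm]
    _ ≤ s ^ n := pow_le_pow_of_le_one hs₀ hs₁ (by omega)

theorem stmt_14 (n : ℕ) (hn : 2 ≤ n)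
    (Φ : (Fin n → ℝ) → ℝ)
    (hΦ : ∀ p, Φ p = (∏ i, p i) ^ ((n : ℝ)⁻¹))
    (γ : ℝ → (Fin n → ℝ))
    (hγ : ∀ t, γ t = fun (i : Fin n) =>
      t * (if (i : ℕ) = 0 then 1 else 0) + (1 - t) * ((n : ℝ)⁻¹)) :
    ∫⁻ t in Set.Ioo (0 : ℝ) 1, ENNReal.ofReal (1 / (Φ (γ t)) ^ 2) = ⊤ := by
  rw [eq_top_iff, ← lintegral_Ioo_inv_sub_eq_top zero_lt_one]
  refine setLIntegral_mono' measurableSet_Ioo fun t ⟨ht₀, ht₁⟩ ↦ ENNReal.ofReal_le_ofReal ?_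
  have hs : 0 < 1 - t := sub_pos.2 ht₁
  have hprod_pos : 0 < ∏ i, γ t i := Finset.prod_pos fun i _ ↦ by rw [hγ]; positivity
  have hprod_le : ∏ i, γ t i ≤ (1 - t) ^ (n - 1) := by
    rw [hγ]
    exact prod_segment_vertex_barycenter_le (by omega) ⟨ht₀.le, ht₁.le⟩
  rw [hΦ]
  exact one_div_le_one_div_of_le (by positivity)
    (sq_rpow_inv_natCast_le hn hprod_pos.le hs.le (by linarith) hprod_le)
end

section
/- For 0 < r < 1, the diversity-weighted portfolio π with πᵢ(p) = pᵢʳ / (Σⱼ pⱼʳ) is generated by Φ(p) = (Σⱼ pⱼʳ)^{1/r}, i.e. 1 + ⟨π(p)/p, q − p⟩ ≥ Φ(q)/Φ(p) for all p, q in the open unit simplex Δ ⊂ ℝⁿ. -/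
/-!
With the diversity weights `w i = p i ^ r / ∑ j, p j ^ r`, the left-hand side is the `w`-mean of
the ratios `q i / p i`, while `(Φ q / Φ p) ^ r` is the `w`-mean of `(q i / p i) ^ r`. The
inequality is therefore Jensen's inequality for the concave map `x ↦ x ^ r`.
-/

namespace DiversityWeighted

open Finset Real

variable {ι : Type*} [Fintype ι] {r : ℝ} {p q : ι → ℝ}

noncomputable def weights (r : ℝ) (p : ι → ℝ) (i : ι) : ℝ := p i ^ r / ∑ j, p j ^ r

lemma sum_rpow_pos [Nonempty ι] (hp : ∀ i, 0 < p i) : 0 < ∑ i, p i ^ r :=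
  sum_pos (fun i _ => rpow_pos_of_pos (hp i) r) univ_nonempty

lemma weights_nonneg (hp : ∀ i, 0 ≤ p i) (i : ι) : 0 ≤ weights r p i :=
  div_nonneg (rpow_nonneg (hp i) r) (sum_nonneg fun j _ => rpow_nonneg (hp j) r)

lemma sum_weights [Nonempty ι] (hp : ∀ i, 0 < p i) : ∑ i, weights r p i = 1 := by
  simp only [weights]
  rw [← sum_div, div_self (sum_rpow_pos hp).ne']

lemma one_add_sum_weights_div_mul_sub [Nonempty ι] (hp : ∀ i, 0 < p i) :
    1 + ∑ i, (weights r p i / p i) * (q i - p i) = ∑ i, weights r p i * (q i / p i) := by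
  have hterm : ∀ i, (weights r p i / p i) * (q i - p i)
      = weights r p i * (q i / p i) - weights r p i := by
    intro i
    field_simp [(hp i).ne']
  simp only [hterm, sum_sub_distrib, sum_weights hp]
  ring

lemma sum_rpow_div_sum_rpow_le [Nonempty ι] (hr₀ : 0 ≤ r) (hr₁ : r ≤ 1)
    (hp : ∀ i, 0 < p i) (hq : ∀ i, 0 ≤ q i) :
    (∑ i, q i ^ r) / ∑ i, p i ^ r ≤ (∑ i, weights r p i * (q i / p i)) ^ r := by
  have hterm : ∀ i, weights r p i * (q i / p i) ^ r = q i ^ r / ∑ j, p j ^ r := by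
    intro i
    rw [weights, div_rpow (hq i) (hp i).le]
    field_simp [(rpow_pos_of_pos (hp i) r).ne']
  calc (∑ i, q i ^ r) / ∑ i, p i ^ r
      = ∑ i, weights r p i • (q i / p i) ^ r := by simp only [smul_eq_mul, hterm, sum_div]
    _ ≤ (∑ i, weights r p i • (q i / p i)) ^ r :=
      (concaveOn_rpow hr₀ hr₁).le_map_sum (fun i _ => weights_nonneg (fun j => (hp j).le) i)
        (sum_weights hp) fun i _ => Set.mem_Ici.mpr (div_nonneg (hq i) (hp i).le)

lemma rpow_mean_div_rpow_mean_le [Nonempty ι] (hr₀ : 0 < r) (hr₁ : r ≤ 1)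
    (hp : ∀ i, 0 < p i) (hq : ∀ i, 0 ≤ q i) :
    (∑ i, q i ^ r) ^ r⁻¹ / (∑ i, p i ^ r) ^ r⁻¹ ≤ ∑ i, weights r p i * (q i / p i) := by
  have hQ : 0 ≤ ∑ i, q i ^ r := sum_nonneg fun i _ => rpow_nonneg (hq i) r
  have hmean : 0 ≤ ∑ i, weights r p i * (q i / p i) :=
    sum_nonneg fun i _ =>
      mul_nonneg (weights_nonneg (fun j => (hp j).le) i) (div_nonneg (hq i) (hp i).le)
  rw [← div_rpow hQ (sum_rpow_pos hp).le,
    rpow_inv_le_iff_of_pos (div_nonneg hQ (sum_rpow_pos hp).le) hmean hr₀]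
  exact sum_rpow_div_sum_rpow_le hr₀.le hr₁ hp hq

end DiversityWeighted

open DiversityWeighted in
theorem stmt_16_general (n : ℕ) (r : ℝ) (hr : r ∈ Set.Ioo (0 : ℝ) 1)
    (Δ : Set (Fin n → ℝ))
    (hΔ : Δ = {p | (∀ i, 0 < p i) ∧ ∑ i, p i = 1})
    (π : (Fin n → ℝ) → (Fin n → ℝ))
    (hπ : ∀ p, π p = fun i => p i ^ r / ∑ j, p j ^ r)
    (Φ : (Fin n → ℝ) → ℝ)
    (hΦ : ∀ p, Φ p = (∑ j, p j ^ r) ^ r⁻¹) :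
    ∀ p ∈ Δ, ∀ q ∈ Δ,
      1 + ∑ i, (π p i / p i) * (q i - p i) ≥ Φ q / Φ p := by
  subst hΔ
  rintro p ⟨hp, hp_sum⟩ q ⟨hq, -⟩
  have : Nonempty (Fin n) :=
    Finset.univ_nonempty_iff.mp (Finset.nonempty_of_sum_ne_zero (hp_sum ▸ one_ne_zero))
  have hπp : π p = weights r p := hπ p
  rw [hπp, hΦ, hΦ, one_add_sum_weights_div_mul_sub hp]
  exact rpow_mean_div_rpow_mean_le hr.1 hr.2.le hp fun i => (hq i).le

theorem stmt_16 (n : ℕ) (hn : 2 ≤ n) (r : ℝ) (hr : r ∈ Set.Ioo (0 : ℝ) 1)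
    (Δ : Set (Fin n → ℝ))
    (hΔ : Δ = {p | (∀ i, 0 < p i) ∧ ∑ i, p i = 1})
    (π : (Fin n → ℝ) → (Fin n → ℝ))
    (hπ : ∀ p, π p = fun i => p i ^ r / ∑ j, p j ^ r)
    (Φ : (Fin n → ℝ) → ℝ)
    (hΦ : ∀ p, Φ p = (∑ j, p j ^ r) ^ r⁻¹) :
    ∀ p ∈ Δ, ∀ q ∈ Δ,
      1 + ∑ i, (π p i / p i) * (q i - p i) ≥ Φ q / Φ p :=
  stmt_16_general n r hr Δ hΔ π hπ Φ hΦ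
end
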